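/- arXiv:1906.05005 — 5 statements merged into one kernel-verified Lean document; each statement's English description precedes it below -/
import Mathlib

section
/- Let F be a field and let M be an n×n matrix over F with all diagonal entries nonzero. If n ≥ R(s, rank(M)+1), where R denotes the Ramsey number, then there exists a set C ⊆ [n] of size s such that for every i, i' ∈ C, at least one of M_{i,i'} and M_{i',i} is nonzero. -/
/-! A set of vertices on which `M` vanishes off the diagonal indexes a principal submatrix
that is diagonal with nonzero diagonal, so it has at most `rank M` elements. An independent
set of size `rank M + 1` in the graph joining `i ≠ i'` when `M i i' ≠ 0` or `M i' i ≠ 0`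
is therefore impossible, and Ramsey's theorem yields a clique of size `s`. -/

/-- `n` has the Ramsey property for `(s, t)`: every graph on `n` vertices contains a
clique of size `s` or an independent set of size `t`. -/
def RamseyProp (n s t : ℕ) : Prop :=
  ∀ G : SimpleGraph (Fin n),
    (∃ K : Finset (Fin n), G.IsNClique s K) ∨
    (∃ I : Finset (Fin n), I.card = t ∧ ∀ i ∈ I, ∀ j ∈ I, ¬ G.Adj i j)

/-- The Ramsey number `R(s, t)`. -/
noncomputable def ramsey (s t : ℕ) : ℕ := sInf {n | RamseyProp n s t}

open Finset

namespace SimpleGraph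

lemma IsNClique.insert_of_subset_filter_adj {V : Type*} [DecidableEq V] {G : SimpleGraph V}
    [DecidableRel G.Adj] {A K : Finset V} {v : V} {k : ℕ} (hK : G.IsNClique k K)
    (hKA : K ⊆ A.filter (G.Adj v)) (hv : v ∈ A) :
    insert v K ⊆ A ∧ G.IsNClique (k + 1) (insert v K) :=
  ⟨insert_subset hv fun _ hw => (mem_filter.1 (hKA hw)).1,
    hK.insert fun _ hw => (mem_filter.1 (hKA hw)).2⟩

lemma card_filter_adj_add_card_filter_compl_adj {V : Type*} [DecidableEq V]
    (G : SimpleGraph V) [DecidableRel G.Adj] {A : Finset V} {v : V} (hv : v ∈ A) :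
    #(A.filter (G.Adj v)) + #(A.filter (Gᶜ.Adj v)) + 1 = #A := by
  have hG : A.filter (G.Adj v) = (A.erase v).filter (G.Adj v) := by
    ext w
    simp only [mem_filter, mem_erase]
    exact ⟨fun h => ⟨⟨h.2.ne', h.1⟩, h.2⟩, fun h => ⟨h.1.2, h.2⟩⟩
  have hGc : A.filter (Gᶜ.Adj v) = (A.erase v).filter (fun w => ¬ G.Adj v w) := by
    ext w
    simp only [mem_filter, mem_erase, compl_adj]
    tauto
  rw [hG, hGc, card_filter_add_card_filter_not, card_erase_add_one hv]

theorem exists_subset_isNClique_or_isNIndepSet {V : Type*} (G : SimpleGraph V) (s t : ℕ)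
    {A : Finset V} (hA : (s + t).choose s ≤ #A) :
    ∃ K ⊆ A, G.IsNClique s K ∨ G.IsNIndepSet t K := by
  classical
  induction s generalizing t A with
  | zero => exact ⟨∅, empty_subset A, .inl (isNClique_empty.2 rfl)⟩
  | succ s ihs =>
    induction t generalizing A with
    | zero => exact ⟨∅, empty_subset A, .inr ⟨by simp [IsIndepSet], rfl⟩⟩
    | succ t iht =>
      obtain ⟨v, hv⟩ : A.Nonempty := card_pos.1 ((Nat.choose_pos (by omega)).trans_le hA)
      have hcard := G.card_filter_adj_add_card_filter_compl_adj hv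
      -- By Pascal's rule, `v` has `C(s+t+1, s)` neighbours or `C(s+t+1, s+1)` non-neighbours.
      have hpascal : (s + 1 + (t + 1)).choose (s + 1) =
          (s + (t + 1)).choose s + (s + 1 + t).choose (s + 1) := by
        rw [show s + 1 + (t + 1) = s + t + 1 + 1 by omega, Nat.choose_succ_succ',
          show s + (t + 1) = s + t + 1 by omega, show s + 1 + t = s + t + 1 by omega]
      obtain hN | hN : (s + (t + 1)).choose s ≤ #(A.filter (G.Adj v)) ∨
          (s + 1 + t).choose (s + 1) ≤ #(A.filter (Gᶜ.Adj v)) := by omega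
      · obtain ⟨K, hKA, hK | hK⟩ := ihs (t + 1) hN
        · obtain ⟨hsub, hclique⟩ := hK.insert_of_subset_filter_adj hKA hv
          exact ⟨insert v K, hsub, .inl hclique⟩
        · exact ⟨K, hKA.trans (filter_subset _ _), .inr hK⟩
      · obtain ⟨K, hKA, hK | hK⟩ := iht hN
        · exact ⟨K, hKA.trans (filter_subset _ _), .inl hK⟩
        · rw [← isNClique_compl] at hK
          obtain ⟨hsub, hclique⟩ := hK.insert_of_subset_filter_adj hKA hv
          exact ⟨insert v K, hsub, .inr ((isNClique_compl _).1 hclique)⟩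

end SimpleGraph

theorem ramseyProp_of_choose_le {n s t : ℕ} (h : (s + t).choose s ≤ n) : RamseyProp n s t := by
  intro G
  obtain ⟨K, -, hK | hK⟩ :=
    G.exists_subset_isNClique_or_isNIndepSet s t (A := univ) (by simpa using h)
  · exact .inl ⟨K, hK⟩
  · refine .inr ⟨K, hK.card_eq, fun i hi j hj => ?_⟩
    rcases eq_or_ne i j with rfl | hij
    · exact G.irrefl
    · exact hK.isIndepSet hi hj hij

theorem RamseyProp.mono {m n s t : ℕ} (hmn : m ≤ n) (h : RamseyProp m s t) :
    RamseyProp n s t := by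
  intro G
  let f := Fin.castLEEmb hmn
  obtain ⟨K, hK⟩ | ⟨I, hI, hindep⟩ := h (G.comap f)
  · exact .inl ⟨K.map f, hK.map.mono (SimpleGraph.map_comap_le f G)⟩
  · exact .inr ⟨I.map f, by rw [card_map, hI],
      forall_mem_map.2 fun i hi => forall_mem_map.2 fun j hj => hindep i hi j hj⟩

theorem ramseyProp_of_ramsey_le {n s t : ℕ} (h : ramsey s t ≤ n) : RamseyProp n s t := by
  have hR : RamseyProp (ramsey s t) s t :=
    Nat.sInf_mem (s := {n | RamseyProp n s t}) ⟨_, ramseyProp_of_choose_le le_rfl⟩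
  exact hR.mono h

theorem Matrix.card_le_rank_of_offDiag_eq_zero {m F : Type*} [Fintype m] [Field F]
    {M : Matrix m m F} {I : Finset m} (hdiag : ∀ i ∈ I, M i i ≠ 0)
    (hoff : ∀ i ∈ I, ∀ j ∈ I, i ≠ j → M i j = 0) : #I ≤ M.rank := by
  classical
  have hsub : M.submatrix (fun i : I => (i : m)) (fun i : I => (i : m)) =
      Matrix.diagonal fun i : I => M i i := by
    ext ⟨i, hi⟩ ⟨j, hj⟩
    rcases eq_or_ne i j with rfl | hij
    · simp
    · simp [hoff i hi j hj hij, hij]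
  calc #I = Fintype.card {i : I // M i i ≠ 0} := by
          rw [Fintype.card_congr (Equiv.subtypeUnivEquiv fun i : I => hdiag i i.2),
            Fintype.card_coe]
    _ = (Matrix.diagonal fun i : I => M i i).rank := (Matrix.rank_diagonal _).symm
    _ ≤ M.rank := hsub ▸ Matrix.rank_submatrix_le M _ _

/-- if `M` is an `n × n` matrix over a field with nonzero diagonal and
`n ≥ R(s, rank M + 1)`, there is a set `C` of `s` indices such that for all
`i, i' ∈ C`, `M i i' ≠ 0` or `M i' i ≠ 0`. -/
theorem exists_nonzero_pattern_clique {F : Type} [Field F] {n s : ℕ}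
    (M : Matrix (Fin n) (Fin n) F) (hdiag : ∀ i, M i i ≠ 0)
    (hn : ramsey s (M.rank + 1) ≤ n) :
    ∃ C : Finset (Fin n), C.card = s ∧
      ∀ i ∈ C, ∀ i' ∈ C, M i i' ≠ 0 ∨ M i' i ≠ 0 := by
  let G := SimpleGraph.fromRel fun i j : Fin n => M i j ≠ 0
  obtain ⟨C, hC⟩ | ⟨I, hI, hindep⟩ := ramseyProp_of_ramsey_le hn G
  · refine ⟨C, hC.card_eq, fun i hi i' hi' => ?_⟩
    rcases eq_or_ne i i' with rfl | hii'
    · exact .inl (hdiag i)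
    · exact ((SimpleGraph.fromRel_adj _ _ _).1 (hC.isClique hi hi' hii')).2
  · have hoff : ∀ i ∈ I, ∀ j ∈ I, i ≠ j → M i j = 0 := fun i hi j hj hij =>
      (by simpa [G, hij] using hindep i hi j hj : M i j = 0 ∧ M j i = 0).1
    have hrank := M.card_le_rank_of_offDiag_eq_zero (fun i _ => hdiag i) hoff
    omega
end

section
/- Let G₁ and G₂ be graphs, and let k = od(G₂) be the orthogonality dimension of G₂ over ℝ. Then the orthogonality dimension of the lexicographic product G₁ • G₂ equals the k-subspace orthogonality dimension of G₁: od(G₁ • G₂) = od_k(G₁). -/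
/-!
Restricted to a fiber `{v₁} × V₂`, an orthogonal representation of `G₁ • G₂` is one of `G₂`, so
each fiber spans a space of dimension at least `od(G₂)`, and the spans of adjacent fibers are
orthogonal; shrinking every span to dimension `od(G₂)` gives a subspace representation of `G₁`.
Conversely, given subspaces `U_v` of dimension `k = od(G₂)` representing `G₁` and a representation
of `G₂` in `ℝ^k`, embedding `ℝ^k` isometrically onto each `U_v` and placing a copy of the
representation of `G₂` in each of them represents `G₁ • G₂`.
-/

open Matrix

/-- The lexicographic product of two simple graphs. -/
def lexProd {V₁ V₂ : Type} (G₁ : SimpleGraph V₁) (G₂ : SimpleGraph V₂) :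
    SimpleGraph (V₁ × V₂) where
  Adj p q := G₁.Adj p.1 q.1 ∨ (p.1 = q.1 ∧ G₂.Adj p.2 q.2)
  symm := by
    refine ⟨?_⟩
    rintro p q (h | ⟨h1, h2⟩)
    · exact Or.inl h.symm
    · exact Or.inr ⟨h1.symm, h2.symm⟩
  loopless := by
    refine ⟨?_⟩
    rintro p (h | ⟨-, h⟩)
    · exact G₁.irrefl h
    · exact G₂.irrefl h

/-- The orthogonality dimension of a graph over ℝ. -/
noncomputable def odG {V : Type} (G : SimpleGraph V) : ℕ :=
  sInf {t | ∃ u : V → Fin t → ℝ, (∀ v, u v ≠ 0) ∧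
    ∀ v v', G.Adj v v' → u v ⬝ᵥ u v' = 0}

/-- The `k`-subspace orthogonality dimension of a graph. -/
noncomputable def odk {V : Type} (k : ℕ) (G : SimpleGraph V) : ℕ :=
  sInf {t | ∃ U : V → Submodule ℝ (Fin t → ℝ),
    (∀ v, Module.finrank ℝ (U v) = k) ∧
    ∀ v v', G.Adj v v' → ∀ x ∈ U v, ∀ y ∈ U v', x ⬝ᵥ y = 0}

open Module Submodule

section DotProduct

variable {ι κ : Type*} [Fintype ι] [Fintype κ]

theorem dotProduct_eq_zero_of_mem_span {R : Type*} [CommSemiring R] {s s' : Set (ι → R)}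
    (h : ∀ a ∈ s, ∀ b ∈ s', a ⬝ᵥ b = 0) {x y : ι → R} (hx : x ∈ span R s)
    (hy : y ∈ span R s') : x ⬝ᵥ y = 0 := by
  have hs : ∀ a ∈ s, a ⬝ᵥ y = 0 := fun a ha =>
    LinearMap.eqOn_span (f := dotProductBilin R R a) (g := 0) (h a ha) hy
  exact LinearMap.eqOn_span (f := (dotProductBilin R R).flip y) (g := 0) hs hx

theorem apply_eq_zero_iff_of_dotProduct_preserving {B : (κ → ℝ) → (ι → ℝ)}
    (hB : ∀ x y, B x ⬝ᵥ B y = x ⬝ᵥ y) {x : κ → ℝ} : B x = 0 ↔ x = 0 := by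
  rw [← dotProduct_self_eq_zero, hB, dotProduct_self_eq_zero]

theorem Submodule.exists_dotProduct_preserving_range_eq {d : ℕ} (S : Submodule ℝ (ι → ℝ))
    (hd : finrank ℝ S = d) :
    ∃ B : (Fin d → ℝ) →ₗ[ℝ] (ι → ℝ), LinearMap.range B = S ∧ ∀ x y, B x ⬝ᵥ B y = x ⬝ᵥ y := by
  let e := WithLp.linearEquiv 2 ℝ (ι → ℝ)
  let S' := S.map e.symm.toLinearMap
  have hS' : finrank ℝ S' = d := hd ▸ e.symm.finrank_map_eq S
  let b := ((stdOrthonormalBasis ℝ S').reindex (finCongr hS')).repr.symm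
  let L : EuclideanSpace ℝ (Fin d) →ₗᵢ[ℝ] EuclideanSpace ℝ ι := S'.subtypeₗᵢ.comp b.toLinearIsometry
  have hL : LinearMap.range L.toLinearMap = S' := by
    change LinearMap.range (S'.subtype ∘ₗ b.toLinearEquiv.toLinearMap) = S'
    rw [LinearMap.range_comp, LinearEquiv.range, Submodule.map_top, range_subtype]
  refine ⟨e.toLinearMap ∘ₗ L.toLinearMap ∘ₗ (WithLp.linearEquiv 2 ℝ (Fin d → ℝ)).symm.toLinearMap,
    ?_, fun x y => ?_⟩
  · rw [LinearMap.range_comp, LinearMap.range_comp, LinearEquiv.range, Submodule.map_top, hL]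
    exact (map_symm_eq_iff e).mp rfl
  · exact L.inner_map_map (WithLp.toLp 2 y) (WithLp.toLp 2 x)

theorem Submodule.exists_le_finrank_eq {K V : Type*} [DivisionRing K] [AddCommGroup V]
    [Module K V] {k : ℕ} (S : Submodule K V) (h : k ≤ finrank K S) :
    ∃ U : Submodule K V, U ≤ S ∧ finrank K U = k := by
  obtain ⟨f, hf⟩ := exists_linearIndependent_of_le_finrank h
  refine ⟨span K (Set.range (S.subtype ∘ f)), span_le.mpr ?_, ?_⟩
  · rintro _ ⟨i, rfl⟩
    exact (f i).2
  · rw [finrank_span_eq_card (hf.map' S.subtype S.ker_subtype), Fintype.card_fin]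

end DotProduct

section Representation

variable {V ι κ : Type*} [Fintype ι] [Fintype κ]

def IsOrthRep (G : SimpleGraph V) (u : V → ι → ℝ) : Prop :=
  (∀ v, u v ≠ 0) ∧ ∀ v v', G.Adj v v' → u v ⬝ᵥ u v' = 0

def IsSubspaceRep (k : ℕ) (G : SimpleGraph V) (U : V → Submodule ℝ (ι → ℝ)) : Prop :=
  (∀ v, finrank ℝ (U v) = k) ∧ ∀ v v', G.Adj v v' → ∀ x ∈ U v, ∀ y ∈ U v', x ⬝ᵥ y = 0

theorem isOrthRep_comp_iff {G : SimpleGraph V} {u : V → κ → ℝ} {B : (κ → ℝ) → (ι → ℝ)}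
    (hB : ∀ x y, B x ⬝ᵥ B y = x ⬝ᵥ y) : IsOrthRep G (B ∘ u) ↔ IsOrthRep G u := by
  simp only [IsOrthRep, Function.comp_apply, hB, ne_eq,
    apply_eq_zero_iff_of_dotProduct_preserving hB]

theorem odG_eq_sInf_isOrthRep {V : Type} (G : SimpleGraph V) :
    odG G = sInf {t | ∃ u : V → Fin t → ℝ, IsOrthRep G u} := rfl

theorem odk_eq_sInf_isSubspaceRep {V : Type} (k : ℕ) (G : SimpleGraph V) :
    odk k G = sInf {t | ∃ U : V → Submodule ℝ (Fin t → ℝ), IsSubspaceRep k G U} := rfl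

theorem exists_isOrthRep_odG {V : Type} [Finite V] (G : SimpleGraph V) :
    ∃ u : V → Fin (odG G) → ℝ, IsOrthRep G u := by
  classical
  obtain ⟨n, ⟨e⟩⟩ := Finite.exists_equiv_fin V
  refine Nat.sInf_mem (s := {t | ∃ u : V → Fin t → ℝ, IsOrthRep G u})
    ⟨n, fun v => Pi.single (e v) 1, fun v hv => ?_, fun v v' hadj => ?_⟩
  · simpa using congrFun hv (e v)
  · simp [e.injective.ne hadj.ne]

theorem IsOrthRep.odG_le_finrank_span {V : Type} {G : SimpleGraph V} {u : V → ι → ℝ}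
    (hu : IsOrthRep G u) : odG G ≤ finrank ℝ (span ℝ (Set.range u)) := by
  obtain ⟨B, hBrange, hB⟩ := (span ℝ (Set.range u)).exists_dotProduct_preserving_range_eq rfl
  have hmem (v : V) : u v ∈ LinearMap.range B := by
    rw [hBrange]
    exact subset_span ⟨v, rfl⟩
  choose u' hu' using hmem
  have hcomp : B ∘ u' = u := funext hu'
  refine Nat.sInf_le ⟨u', (isOrthRep_comp_iff hB).mp ?_⟩
  rwa [hcomp]

end Representation

section LexProd

variable {V₁ V₂ : Type} {G₁ : SimpleGraph V₁} {G₂ : SimpleGraph V₂} {ι : Type*} [Fintype ι]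

theorem IsOrthRep.lexProd_fiber {w : V₁ × V₂ → ι → ℝ} (hw : IsOrthRep (lexProd G₁ G₂) w)
    (v₁ : V₁) : IsOrthRep G₂ fun v₂ => w (v₁, v₂) :=
  ⟨fun _ => hw.1 _, fun _ _ hadj => hw.2 _ _ (Or.inr ⟨rfl, hadj⟩)⟩

theorem IsOrthRep.exists_isSubspaceRep_of_lexProd {w : V₁ × V₂ → ι → ℝ}
    (hw : IsOrthRep (lexProd G₁ G₂) w) :
    ∃ U : V₁ → Submodule ℝ (ι → ℝ), IsSubspaceRep (odG G₂) G₁ U := by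
  choose U hUle hUrank using fun v₁ =>
    (span ℝ (Set.range fun v₂ => w (v₁, v₂))).exists_le_finrank_eq
      (hw.lexProd_fiber v₁).odG_le_finrank_span
  refine ⟨U, hUrank, fun v v' hadj x hx y hy =>
    dotProduct_eq_zero_of_mem_span ?_ (hUle v hx) (hUle v' hy)⟩
  rintro _ ⟨a, rfl⟩ _ ⟨b, rfl⟩
  exact hw.2 (v, a) (v', b) (Or.inl hadj)

theorem IsSubspaceRep.exists_isOrthRep_lexProd {d : ℕ} {U : V₁ → Submodule ℝ (ι → ℝ)}
    (hU : IsSubspaceRep d G₁ U) {u : V₂ → Fin d → ℝ} (hu : IsOrthRep G₂ u) :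
    ∃ w : V₁ × V₂ → ι → ℝ, IsOrthRep (lexProd G₁ G₂) w := by
  choose B hBrange hB using fun v₁ => (U v₁).exists_dotProduct_preserving_range_eq (hU.1 v₁)
  have hBU (v₁ : V₁) (x : Fin d → ℝ) : B v₁ x ∈ U v₁ := hBrange v₁ ▸ LinearMap.mem_range_self _ x
  refine ⟨fun p => B p.1 (u p.2), fun p => ((isOrthRep_comp_iff (hB p.1)).mpr hu).1 p.2, ?_⟩
  rintro ⟨a₁, a₂⟩ ⟨b₁, b₂⟩ (hadj | ⟨rfl : a₁ = b₁, hadj⟩)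
  · exact hU.2 a₁ b₁ hadj _ (hBU a₁ _) _ (hBU b₁ _)
  · exact (hB a₁ _ _).trans (hu.2 a₂ b₂ hadj)

end LexProd

theorem od_lexProd_general {V₁ V₂ : Type} [Fintype V₂]
    (G₁ : SimpleGraph V₁) (G₂ : SimpleGraph V₂) :
    odG (lexProd G₁ G₂) = odk (odG G₂) G₁ := by
  obtain ⟨u, hu⟩ := exists_isOrthRep_odG G₂
  rw [odG_eq_sInf_isOrthRep, odk_eq_sInf_isSubspaceRep]
  congr 1
  ext t
  exact ⟨fun ⟨_, hw⟩ => hw.exists_isSubspaceRep_of_lexProd,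
    fun ⟨_, hU⟩ => hU.exists_isOrthRep_lexProd hu⟩

/-- od(G₁ • G₂) = od_k(G₁) where k = od(G₂). -/
theorem od_lexProd {V₁ V₂ : Type} [Fintype V₁] [Fintype V₂]
    (G₁ : SimpleGraph V₁) (G₂ : SimpleGraph V₂) :
    odG (lexProd G₁ G₂) = odk (odG G₂) G₁ :=
  od_lexProd_general G₁ G₂
end

section
/- Let G = (V,E) be a graph such that od_k(G) ≤ 2k for some positive integer k, i.e., G admits a 2k-dimensional orthogonal k-subspace representation. Then G is 2-colorable (bipartite). -/
open Matrix

/-!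
If `U v` and `U w` are orthogonal `k`-dimensional subspaces of `ℝ^(2k)`, then `U w = (U v)ᗮ`.
Orthogonal complementation is an involution without fixed points on the subspaces of a nontrivial
space, so colouring `v` by whether `U v` precedes `(U v)ᗮ` in some fixed linear order of the
subspaces gives adjacent vertices different colours.
-/

theorem SimpleGraph.colorable_two_of_adj_eq_involution {V α : Type*} {G : SimpleGraph V}
    (f : V → α) (σ : α → α) (hσ : Function.Involutive σ) (hfix : ∀ a, σ a ≠ a)
    (hadj : ∀ v w, G.Adj v w → f w = σ (f v)) : G.Colorable 2 := by
  let : LinearOrder α := IsWellOrder.linearOrder WellOrderingRel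
  refine (Coloring.mk (fun v => decide (f v < σ (f v))) fun {v w} h => ?_).colorable
  rw [hadj v w h, hσ, ne_eq, decide_eq_decide]
  rcases (hfix (f v)).lt_or_gt with hlt | hlt <;> simp [hlt, hlt.not_gt]

namespace Submodule

variable {𝕜 E : Type*} [RCLike 𝕜] [NormedAddCommGroup E] [InnerProductSpace 𝕜 E]

theorem orthogonal_ne_self [Nontrivial E] (K : Submodule 𝕜 E) : Kᗮ ≠ K := by
  intro h
  have hK : K = ⊥ := by simpa [h] using K.inf_orthogonal_eq_bot
  rw [hK, bot_orthogonal_eq_top] at h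
  exact top_ne_bot h

theorem eq_orthogonal_of_le_of_finrank_add_eq [FiniteDimensional 𝕜 E] {K L : Submodule 𝕜 E}
    (hle : L ≤ Kᗮ) (hrank : Module.finrank 𝕜 K + Module.finrank 𝕜 L = Module.finrank 𝕜 E) :
    L = Kᗮ :=
  eq_of_le_of_finrank_eq hle (by have := K.finrank_add_finrank_orthogonal; omega)

end Submodule

/-- a graph admitting a `2k`-dimensional orthogonal `k`-subspace
representation is 2-colorable. -/
theorem two_colorable_of_odk_le_two_k {V : Type} (G : SimpleGraph V)
    (k : ℕ) (hk : 0 < k)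
    (U : V → Submodule ℝ (Fin (2 * k) → ℝ))
    (hdim : ∀ v, Module.finrank ℝ (U v) = k)
    (horth : ∀ v v', G.Adj v v' → ∀ x ∈ U v, ∀ y ∈ U v', x ⬝ᵥ y = 0) :
    G.Colorable 2 := by
  let W v : Submodule ℝ (EuclideanSpace ℝ (Fin (2 * k))) :=
    (U v).map (EuclideanSpace.equiv (Fin (2 * k)) ℝ).toLinearEquiv.symm.toLinearMap
  have hWdim v : Module.finrank ℝ (W v) = k := (LinearEquiv.finrank_map_eq _ _).trans (hdim v)
  have hW v w (h : G.Adj v w) : W w = (W v)ᗮ := by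
    refine Submodule.eq_orthogonal_of_le_of_finrank_add_eq ?_
      (by rw [hWdim, hWdim, finrank_euclideanSpace_fin]; omega)
    rintro _ ⟨y, hy, rfl⟩
    rw [Submodule.mem_orthogonal]
    rintro _ ⟨x, hx, rfl⟩
    simpa [EuclideanSpace.inner_eq_star_dotProduct, dotProduct_comm] using horth v w h x hx y hy
  have : Nontrivial (EuclideanSpace ℝ (Fin (2 * k))) :=
    Module.finrank_pos_iff.mp (by rw [finrank_euclideanSpace_fin]; omega)
  exact SimpleGraph.colorable_two_of_adj_eq_involution W (·ᗮ)
    (fun K => K.orthogonal_orthogonal) Submodule.orthogonal_ne_self hW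
end

section
/- Let G = (V,E) be a graph with od_k(G) ≤ 3k for some positive integer k. Then for every vertex v ∈ V, the subgraph of G induced by the neighborhood N(v) of v is 2-colorable. -/
/-!
If `U` is an orthogonal `k`-subspace representation in dimension `3k`, the subspaces of the
neighbours of `v` all lie in the `2k`-dimensional space `(U v)ᗮ`. In dimension `2k`, adjacency
forces `U w = (U v)ᗮ`, so the representation is a graph homomorphism into the graph of the
involution `S ↦ Sᗮ`, whose edges form a matching and which is therefore 2-colourable.
-/

open Matrix Module

namespace SimpleGraph

theorem colorable_two_fromRel_involutive {α : Type*} {σ : α → α} (hσ : Function.Involutive σ) :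
    (fromRel fun a b => b = σ a).Colorable 2 := by
  classical
  -- colour `a` by whether it precedes its partner `σ a` in a well-order
  let r := @WellOrderingRel α
  have r_ne_flip : ∀ {a b}, a ≠ b → ¬(r a b ↔ r b a) := fun {a b} hab h => by
    rcases trichotomous_of r a b with hr | rfl | hr
    exacts [asymm hr (h.1 hr), hab rfl, asymm hr (h.2 hr)]
  refine (Coloring.mk (fun a => decide (r a (σ a))) ?_).colorable
  rintro a b ⟨hab, rfl | rfl⟩ <;> simp only [hσ _, ne_eq, decide_eq_decide]
  all_goals exact r_ne_flip hab

variable {V : Type*} {𝕜 E : Type*} [RCLike 𝕜] [NormedAddCommGroup E] [InnerProductSpace 𝕜 E]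

/-- `od_k(G) ≤ t` in the paper's notation means that such a `U` exists with `finrank 𝕜 E = t`. -/
def IsOrthogonalSubspaceRep (G : SimpleGraph V) (k : ℕ) (U : V → Submodule 𝕜 E) : Prop :=
  (∀ v, finrank 𝕜 (U v) = k) ∧ ∀ v w, G.Adj v w → U w ≤ (U v)ᗮ

namespace IsOrthogonalSubspaceRep

variable {G : SimpleGraph V} {k : ℕ} {U : V → Submodule 𝕜 E}

theorem eq_orthogonal_of_adj [FiniteDimensional 𝕜 E] (hU : G.IsOrthogonalSubspaceRep k U)
    (hE : finrank 𝕜 E = 2 * k) {v w : V} (h : G.Adj v w) : U w = (U v)ᗮ :=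
  Submodule.eq_of_le_of_finrank_eq (hU.2 v w h) <| by
    rw [hU.1 w, Submodule.finrank_add_finrank_orthogonal' (n := k) (by rw [hU.1 v, hE]; omega)]

theorem ne_of_adj (hU : G.IsOrthogonalSubspaceRep k U) (hk : 0 < k) {v w : V} (h : G.Adj v w) :
    U v ≠ U w := by
  intro hvw
  have hbot : U v = ⊥ := (U v).orthogonal_disjoint.eq_bot_of_le (hvw ▸ hU.2 v w h)
  have := hU.1 v
  rw [hbot, finrank_bot] at this
  omega

theorem colorable_two [FiniteDimensional 𝕜 E] (hU : G.IsOrthogonalSubspaceRep k U) (hk : 0 < k)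
    (hE : finrank 𝕜 E = 2 * k) : G.Colorable 2 := by
  let f : G →g fromRel fun S T : Submodule 𝕜 E => T = Sᗮ :=
    ⟨U, fun h => ⟨hU.ne_of_adj hk h, Or.inl (hU.eq_orthogonal_of_adj hE h)⟩⟩
  exact (colorable_two_fromRel_involutive fun S => S.orthogonal_orthogonal).of_hom f

theorem comap {V' : Type*} {G' : SimpleGraph V'} (hU : G.IsOrthogonalSubspaceRep k U)
    (f : G' →g G) : G'.IsOrthogonalSubspaceRep k (U ∘ f) :=
  ⟨fun v => hU.1 (f v), fun _ _ h => hU.2 _ _ (f.map_adj h)⟩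

theorem comap_subtype (hU : G.IsOrthogonalSubspaceRep k U) {K : Submodule 𝕜 E}
    (hK : ∀ v, U v ≤ K) : G.IsOrthogonalSubspaceRep k fun v => (U v).comap K.subtype := by
  refine ⟨fun v => ?_, fun v w h x hx y hy => ?_⟩
  · rw [(Submodule.comapSubtypeEquivOfLe (hK v)).finrank_eq, hU.1 v]
  · exact hU.2 v w h hx y hy

theorem induce_neighborSet (hU : G.IsOrthogonalSubspaceRep k U) (v : V) :
    (G.induce (G.neighborSet v)).IsOrthogonalSubspaceRep k
      fun w => (U w).comap (U v)ᗮ.subtype :=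
  (hU.comap (Embedding.induce _).toHom).comap_subtype fun w => hU.2 v w w.2

theorem colorable_two_induce_neighborSet [FiniteDimensional 𝕜 E]
    (hU : G.IsOrthogonalSubspaceRep k U) (hk : 0 < k) (hE : finrank 𝕜 E = 3 * k) (v : V) :
    (G.induce (G.neighborSet v)).Colorable 2 :=
  (hU.induce_neighborSet v).colorable_two hk <|
    Submodule.finrank_add_finrank_orthogonal' (by rw [hU.1 v, hE]; omega)

end IsOrthogonalSubspaceRep

theorem isOrthogonalSubspaceRep_of_dotProduct {G : SimpleGraph V} {ι : Type*} [Fintype ι] {k : ℕ}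
    {U : V → Submodule ℝ (ι → ℝ)} (hdim : ∀ v, finrank ℝ (U v) = k)
    (horth : ∀ v w, G.Adj v w → ∀ x ∈ U v, ∀ y ∈ U w, x ⬝ᵥ y = 0) :
    G.IsOrthogonalSubspaceRep k fun v =>
      (U v).comap (WithLp.linearEquiv 2 ℝ (ι → ℝ)).toLinearMap := by
  refine ⟨fun v => ?_, fun v w h x hx y hy => ?_⟩
  · beta_reduce
    rw [Submodule.comap_equiv_eq_map_symm, LinearEquiv.finrank_map_eq, hdim v]
  · rw [EuclideanSpace.inner_eq_star_dotProduct, star_trivial, dotProduct_comm]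
    exact horth v w h _ hy _ hx

end SimpleGraph

/-- if a graph admits a `3k`-dimensional orthogonal `k`-subspace
representation, then the subgraph induced on every neighborhood is 2-colorable. -/
theorem neighborhood_two_colorable {V : Type} (G : SimpleGraph V)
    (k : ℕ) (hk : 0 < k)
    (U : V → Submodule ℝ (Fin (3 * k) → ℝ))
    (hdim : ∀ v, Module.finrank ℝ (U v) = k)
    (horth : ∀ v v', G.Adj v v' → ∀ x ∈ U v, ∀ y ∈ U v', x ⬝ᵥ y = 0) :
    ∀ v : V, (G.induce (G.neighborSet v)).Colorable 2 :=
  (SimpleGraph.isOrthogonalSubspaceRep_of_dotProduct hdim horth).colorable_two_induce_neighborSet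
    hk finrank_euclideanSpace_fin
end

section
/- Let H be the 4-uniform hypergraph of Bhangale's reduction from a Label Cover instance L = (U,V,E,R,L,φ): vertices are pairs (x,A) for x ∈ U and A a vertex of the Schrijver graph S(R,s), and {(x,A),(x,B),(y,C),(y,D)} is a hyperedge (for x,y with a common neighbor z) iff for all α,β ∈ [R] with φ_{x→z}(α) = φ_{y→z}(β), the collection {A_α, B_α, C_β, D_β} contains both values 0 and 1. If L has a satisfying assignment ρ (meaning φ_{x→z}(ρ(x)) = ρ(z) for every edge (x,z)), then χ(H) ≤ 2 and hence od(H) ≤ 2. -/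
open Matrix
/-- Vertices of the Schrijver graph `S(R, s)`: stable `s`-subsets of `ℤ/R` (no two
cyclically consecutive elements). -/
abbrev SchrijverVert (R s : ℕ) [NeZero R] : Type :=
  {A : Finset (Fin R) // A.card = s ∧ ∀ i : Fin R, i ∈ A → i + 1 ∉ A}
/-- The hyperedges of Bhangale's reduction hypergraph `H` built from a Label Cover
instance: `{(x,A),(x,B),(y,C),(y,D)}` is a hyperedge whenever `x` and `y` have a common
neighbor `z` and for all `α, β` with `φ_{x→z}(α) = φ_{y→z}(β)` the four membership bits
`A_α, B_α, C_β, D_β` are not all equal (i.e., equal `{0,1}` as a set). -/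
def bhangaleEdges {U W : Type} [DecidableEq U] (E : Set (U × W)) (R L s : ℕ) [NeZero R]
    (φ : U × W → Fin R → Fin L) : Set (Finset (U × SchrijverVert R s)) :=
  {e | ∃ (x y : U) (z : W) (A B C D : SchrijverVert R s),
    (x, z) ∈ E ∧ (y, z) ∈ E ∧
    (∀ α β : Fin R, φ (x, z) α = φ (y, z) β →
      ¬((α ∈ A.1 ↔ α ∈ B.1) ∧ (α ∈ A.1 ↔ β ∈ C.1) ∧ (α ∈ A.1 ↔ β ∈ D.1))) ∧
    e = {(x, A), (x, B), (y, C), (y, D)}}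
/-- completeness of Bhangale's reduction: if the Label Cover instance
has a satisfying assignment, then the reduction hypergraph `H` is 2-colorable and hence
has orthogonality dimension at most 2. -/
theorem bhangale_completeness {U W : Type} [DecidableEq U] (E : Set (U × W))
    (R L s : ℕ) [NeZero R] (φ : U × W → Fin R → Fin L)
    (ρU : U → Fin R) (ρW : W → Fin L)
    (hsat : ∀ x z, (x, z) ∈ E → φ (x, z) (ρU x) = ρW z) :
    (∃ c : U × SchrijverVert R s → Fin 2,
      ∀ e ∈ bhangaleEdges E R L s φ, ∃ p ∈ e, ∃ q ∈ e, c p ≠ c q) ∧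
    (∃ u : U × SchrijverVert R s → Fin 2 → ℝ, (∀ p, u p ≠ 0) ∧
      ∀ e ∈ bhangaleEdges E R L s φ, ∃ p ∈ e, ∃ q ∈ e, p ≠ q ∧ u p ⬝ᵥ u q = 0) := by
  classical
  -- the 2-coloring: color of (x, A) is whether ρU x ∈ A
  set c : U × SchrijverVert R s → Fin 2 :=
    fun p => if ρU p.1 ∈ p.2.1 then 1 else 0 with hc
  have hcdiff : ∀ p q : U × SchrijverVert R s,
      ¬(ρU p.1 ∈ p.2.1 ↔ ρU q.1 ∈ q.2.1) → c p ≠ c q := by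
    intro p q h
    simp only [hc]
    by_cases hp : ρU p.1 ∈ p.2.1 <;> by_cases hq : ρU q.1 ∈ q.2.1 <;>
      simp_all
  have key : ∀ e ∈ bhangaleEdges E R L s φ, ∃ p ∈ e, ∃ q ∈ e, c p ≠ c q := by
    rintro e ⟨x, y, z, A, B, C, D, hx, hy, hne, rfl⟩
    have h := hne (ρU x) (ρU y) (by rw [hsat x z hx, hsat y z hy])
    have hmem : ∀ P ∈ ({(x, A), (x, B), (y, C), (y, D)} :
        Finset (U × SchrijverVert R s)), True := fun _ _ => trivial
    by_cases h1 : (ρU x ∈ A.1 ↔ ρU x ∈ B.1)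
    · by_cases h2 : (ρU x ∈ A.1 ↔ ρU y ∈ C.1)
      · have h3 : ¬(ρU x ∈ A.1 ↔ ρU y ∈ D.1) := fun h3 => h ⟨h1, h2, h3⟩
        exact ⟨(x, A), by simp, (y, D), by simp, hcdiff _ _ h3⟩
      · exact ⟨(x, A), by simp, (y, C), by simp, hcdiff _ _ h2⟩
    · exact ⟨(x, A), by simp, (x, B), by simp, hcdiff _ _ h1⟩
  refine ⟨⟨c, key⟩, ?_⟩
  -- vectors: e₀ for color 0, e₁ for color 1
  refine ⟨fun p => if c p = 0 then ![1, 0] else ![0, 1], ?_, ?_⟩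
  · intro p
    by_cases hp : c p = 0 <;> simp [hp]
  · intro e he
    obtain ⟨p, hp, q, hq, hpq⟩ := key e he
    refine ⟨p, hp, q, hq, fun h => hpq (by rw [h]), ?_⟩
    have : c p = 0 ∧ c q = 1 ∨ c p = 1 ∧ c q = 0 := by omega
    rcases this with ⟨h1, h2⟩ | ⟨h1, h2⟩ <;>
      simp [h1, h2, dotProduct, Fin.sum_univ_two]
end
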